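/- For α ≥ 2, replacing any complete 3-break in a transformation by two suitable 2-breaks yields a valid transformation whose weight W_α does not increase (strictly decreases when α > 2); consequently, for every pair of genomes P, Q there is a minimum-weight transformation under W_α consisting only of 2-breaks, and D_α(P,Q) = D_2 restricted to 2-breaks equals |P| − c(P,Q) + (α−2)·0, i.e., D_α(P,Q) = d_2(P,Q) for α ≥ 2. -/

import Mathlib

open Finset

/-- A genome on a vertex set `V` of gene extremities: a perfect matching,
encoded as a fixed-point-free involution. -/
structure Genome (V : Type*) [Fintype V] [DecidableEq V] where
  perm : Equiv.Perm V
  invol : ∀ v, perm (perm v) = v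
  noFix : ∀ v, perm v ≠ v

namespace Genome

variable {V : Type*} [Fintype V] [DecidableEq V]

/-- Number of vertices whose matching partner differs between `P` and `P'`
(each changed black edge contributes 2 vertices). -/
def changed (P P' : Genome V) : ℕ :=
  (univ.filter fun v => P.perm v ≠ P'.perm v).card

/-- A 2-break changes exactly 2 black edges. -/
def Is2Break (P P' : Genome V) : Prop := changed P P' = 4

/-- A complete 3-break changes exactly 3 black edges. -/
def IsComplete3Break (P P' : Genome V) : Prop := changed P P' = 6

/-- A 3-break changes 2 or 3 black edges. -/
def Is3Break (P P' : Genome V) : Prop := Is2Break P P' ∨ IsComplete3Break P P'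

/-- The permutation whose orbits trace the black-gray alternating cycles of the
breakpoint graph `G(P,Q)`; each alternating cycle with `k` black edges yields
exactly two orbits of size `k`. -/
def sigma (P Q : Genome V) : Equiv.Perm V := Q.perm * P.perm

/-- Number of orbits of a permutation (nontrivial cycles plus fixed points). -/
def orbitsCard (σ : Equiv.Perm V) : ℕ :=
  Multiset.card σ.cycleType + (univ.filter fun v => σ v = v).card

/-- Number of odd-size orbits of a permutation. -/
def oddOrbitsCard (σ : Equiv.Perm V) : ℕ :=
  Multiset.card (σ.cycleType.filter fun k => Odd k) +
    (univ.filter fun v => σ v = v).card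

/-- `c P Q`: the number of black-gray cycles in the breakpoint graph `G(P,Q)`. -/
def c (P Q : Genome V) : ℕ := orbitsCard (sigma P Q) / 2

/-- `cOdd P Q`: the number of black-gray cycles with an odd number of black edges. -/
def cOdd (P Q : Genome V) : ℕ := oddOrbitsCard (sigma P Q) / 2

/-- `cEven P Q`: the number of black-gray cycles with an even number of black edges. -/
def cEven (P Q : Genome V) : ℕ := c P Q - cOdd P Q

/-- Change in the number of black-gray cycles (w.r.t. target `Q`) caused by the
rearrangement turning `A` into `B`. -/
def dC (Q A B : Genome V) : ℤ := (c B Q : ℤ) - (c A Q : ℤ)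

def dCOdd (Q A B : Genome V) : ℤ := (cOdd B Q : ℤ) - (cOdd A Q : ℤ)

def dCEven (Q A B : Genome V) : ℤ := (cEven B Q : ℤ) - (cEven A Q : ℤ)

/-- A transformation of `P` into `Q`: a sequence of genomes starting at `P`,
ending at `Q`, each consecutive pair related by a 3-break. -/
structure Transformation (P Q : Genome V) where
  steps : List (Genome V)
  chain : List.Chain Is3Break P steps
  last_eq : (P :: steps).getLast (List.cons_ne_nil _ _) = Q

namespace Transformation

variable {P Q : Genome V}

/-- The individual rearrangements of a transformation, as pairs (before, after). -/
def pairs (t : Transformation P Q) : List (Genome V × Genome V) :=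
  (P :: t.steps).zip t.steps

/-- Length (number of rearrangements) of the transformation. -/
def len (t : Transformation P Q) : ℕ := t.steps.length

/-- Number of 2-breaks in `t`. -/
def n2 (t : Transformation P Q) : ℕ :=
  t.pairs.countP fun r => r.1.changed r.2 == 4

/-- Number of complete 3-breaks in `t`. -/
def n3 (t : Transformation P Q) : ℕ :=
  t.pairs.countP fun r => r.1.changed r.2 == 6

/-- Total number of breakages (changed black edges) made by `t`. -/
def breakages (t : Transformation P Q) : ℕ :=
  (t.pairs.map fun r => r.1.changed r.2 / 2).sum

/-- Weight of a transformation with complete 3-breaks weighted `α`. -/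
noncomputable def W (α : ℝ) (t : Transformation P Q) : ℝ := (t.n2 : ℝ) + α * t.n3

end Transformation

/-- The 3-break distance: minimum length of a transformation. -/
noncomputable def d3 (P Q : Genome V) : ℕ :=
  sInf {m | ∃ t : Transformation P Q, t.len = m}

/-- The 2-break distance: minimum length of a transformation using only 2-breaks. -/
noncomputable def d2 (P Q : Genome V) : ℕ :=
  sInf {m | ∃ t : Transformation P Q,
    (∀ r ∈ t.pairs, Is2Break r.1 r.2) ∧ t.len = m}

/-- A transformation is optimal if it simultaneously has the shortest length and
makes the smallest number of breakages among all transformations from `P` to `Q`. -/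
def IsOptimal {P Q : Genome V} (t : Transformation P Q) : Prop :=
  (∀ t' : Transformation P Q, t.len ≤ t'.len) ∧
  (∀ t' : Transformation P Q, t.breakages ≤ t'.breakages)

/-- The weighted distance `D_α`. -/
noncomputable def Dist (α : ℝ) (P Q : Genome V) : ℝ :=
  sInf {w | ∃ t : Transformation P Q, Transformation.W α t = w}

end Genome


/-!
A complete 3-break `A → B` moves the partners of six vertices. For one of them, `u`, the 2-break
of `A` creating the edge `{u, B u}` of `B` agrees with `B` at `u` and `B u` and creates no new
disagreement, so it leaves at most four vertices to fix; since two distinct matchings always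
disagree on at least four vertices, what remains is exactly one more 2-break. Each such
replacement changes `W_α` by `2 - α ≤ 0`, so minimum weight is attained by a transformation
made of 2-breaks only, whose weight is its length; the shortest one has length `d₂`.
-/

namespace Genome

variable {V : Type*} [Fintype V] [DecidableEq V]

instance : DecidableRel (Is2Break (V := V)) := fun _ _ => inferInstanceAs (Decidable (_ = 4))

instance : DecidableRel (IsComplete3Break (V := V)) := fun _ _ =>
  inferInstanceAs (Decidable (_ = 6))

lemma ext {P Q : Genome V} (h : ∀ v, P.perm v = Q.perm v) : P = Q := by
  obtain ⟨p, _, _⟩ := P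
  obtain ⟨q, _, _⟩ := Q
  obtain rfl : p = q := Equiv.ext h
  rfl

lemma exists_perm_apply_ne {P Q : Genome V} (h : P ≠ Q) : ∃ v, P.perm v ≠ Q.perm v := by
  by_contra! h'
  exact h (ext h')

lemma perm_eq_iff_eq_perm (P : Genome V) {x y : V} : P.perm x = y ↔ x = P.perm y := by
  constructor <;> rintro rfl <;> simp only [P.invol]

def diff (P Q : Genome V) : Finset V := univ.filter fun v => P.perm v ≠ Q.perm v

lemma changed_eq_card_diff (P Q : Genome V) : changed P Q = (diff P Q).card := rfl

lemma mem_diff {P Q : Genome V} {v : V} : v ∈ diff P Q ↔ P.perm v ≠ Q.perm v := by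
  simp [diff]

lemma diff_comm (P Q : Genome V) : diff P Q = diff Q P := by
  ext v
  simp only [mem_diff, ne_comm]

lemma perm_mem_diff_left {P Q : Genome V} {v : V} (h : v ∈ diff P Q) :
    P.perm v ∈ diff P Q := by
  rw [mem_diff, P.invol]
  exact fun h' => mem_diff.1 h (Q.perm_eq_iff_eq_perm.1 h'.symm)

lemma perm_mem_diff_right {P Q : Genome V} {v : V} (h : v ∈ diff P Q) :
    Q.perm v ∈ diff P Q := by
  rw [diff_comm] at h ⊢
  exact perm_mem_diff_left h

/-- If `P a ≠ Q a`, then `a`, `P a`, `Q a` and `P (Q a)` are four distinct vertices where `P`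
and `Q` disagree. -/
lemma four_le_changed {P Q : Genome V} (h : P ≠ Q) : 4 ≤ changed P Q := by
  obtain ⟨a, ha⟩ := exists_perm_apply_ne h
  have hmem : a ∈ diff P Q := mem_diff.2 ha
  have hsub : {a, P.perm a, Q.perm a, P.perm (Q.perm a)} ⊆ diff P Q := by
    simp only [insert_subset_iff, singleton_subset_iff]
    exact ⟨hmem, perm_mem_diff_left hmem, perm_mem_diff_right hmem,
      perm_mem_diff_left (perm_mem_diff_right hmem)⟩
  have h1 : a ≠ P.perm a := (P.noFix a).symm
  have h2 : a ≠ Q.perm a := (Q.noFix a).symm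
  have h3 : a ≠ P.perm (Q.perm a) := fun e => ha (P.perm_eq_iff_eq_perm.2 e)
  have h4 : P.perm a ≠ P.perm (Q.perm a) := fun e => h2 (P.perm.injective e)
  have h5 : Q.perm a ≠ P.perm (Q.perm a) := (P.noFix _).symm
  rw [changed_eq_card_diff]
  refine le_trans (le_of_eq ?_) (card_le_card hsub)
  rw [card_insert_of_notMem (by simp [h1, h2, h3]), card_insert_of_notMem (by simp [ha, h4]),
    card_insert_of_notMem (by simp [h5]), card_singleton]

/-- Replaces the edges `{u, A u}`, `{v, A v}` of `A` by `{u, v}`, `{A u, A v}`. -/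
def twoBreak (A : Genome V) (u v : V) : Genome V where
  perm := Equiv.swap (A.perm u) v * A.perm * Equiv.swap (A.perm u) v
  invol x := by simp [A.invol]
  noFix x h := A.noFix (Equiv.swap (A.perm u) v x) <| by
    simpa [Equiv.swap_apply_eq_iff] using h

section twoBreak

variable {A : Genome V} {u v x : V}

lemma twoBreak_perm_apply :
    (A.twoBreak u v).perm x = Equiv.swap (A.perm u) v (A.perm (Equiv.swap (A.perm u) v x)) :=
  rfl

lemma twoBreak_apply_left (huv : u ≠ v) : (A.twoBreak u v).perm u = v := by
  rw [twoBreak_perm_apply, Equiv.swap_apply_of_ne_of_ne (A.noFix u).symm huv,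
    Equiv.swap_apply_left]

lemma twoBreak_apply_right (huv : u ≠ v) : (A.twoBreak u v).perm v = u :=
  ((A.twoBreak u v).perm_eq_iff_eq_perm.1 (twoBreak_apply_left huv)).symm

lemma twoBreak_apply_of_ne (hxu : x ≠ u) (hxv : x ≠ v) (hxAu : x ≠ A.perm u)
    (hxAv : x ≠ A.perm v) : (A.twoBreak u v).perm x = A.perm x := by
  rw [twoBreak_perm_apply, Equiv.swap_apply_of_ne_of_ne hxAu hxv,
    Equiv.swap_apply_of_ne_of_ne (fun h => hxu (A.perm.injective h))
      (fun h => hxAv (A.perm_eq_iff_eq_perm.1 h))]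

lemma is2Break_twoBreak (huv : u ≠ v) (hv : A.perm u ≠ v) : Is2Break A (A.twoBreak u v) := by
  have hne : A ≠ A.twoBreak u v := fun h => hv (by rw [h, twoBreak_apply_left huv])
  have hsub : diff A (A.twoBreak u v) ⊆ {u, v, A.perm u, A.perm v} := by
    intro x hx
    by_contra hx'
    simp only [mem_insert, mem_singleton, not_or] at hx'
    obtain ⟨hxu, hxv, hxAu, hxAv⟩ := hx'
    exact mem_diff.1 hx (twoBreak_apply_of_ne hxu hxv hxAu hxAv).symm
  exact le_antisymm ((card_le_card hsub).trans card_le_four) (four_le_changed hne)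

/-- The 2-break of `A` that creates the edge `{u, B u}` of `B` fixes the two vertices `u`, `B u`
and creates no new disagreement with `B`. -/
lemma changed_twoBreak_add_two_le {B : Genome V} (h : A.perm u ≠ B.perm u) :
    changed (A.twoBreak u (B.perm u)) B + 2 ≤ changed A B := by
  have huv : u ≠ B.perm u := (B.noFix u).symm
  have hu : u ∈ diff A B := mem_diff.2 h
  have hsub : diff (A.twoBreak u (B.perm u)) B ⊆ ((diff A B).erase u).erase (B.perm u) := by
    intro x hx
    have hxu : x ≠ u := by
      rintro rfl
      exact mem_diff.1 hx (twoBreak_apply_left huv)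
    have hxv : x ≠ B.perm u := by
      rintro rfl
      exact mem_diff.1 hx (by rw [twoBreak_apply_right huv, B.invol])
    refine mem_erase.2 ⟨hxv, mem_erase.2 ⟨hxu, mem_diff.2 ?_⟩⟩
    by_cases hxAu : x = A.perm u
    · rw [hxAu, A.invol]
      exact fun e => hxv (hxAu.trans (B.perm_eq_iff_eq_perm.1 e.symm))
    by_cases hxAv : x = A.perm (B.perm u)
    · rw [hxAv, A.invol]
      exact fun e => hxu (hxAv.trans (B.perm.injective e).symm)
    rw [← twoBreak_apply_of_ne hxu hxv hxAu hxAv]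
    exact mem_diff.1 hx
  have h₁ := card_erase_add_one hu
  have h₂ := card_erase_add_one (mem_erase.2 ⟨huv.symm, perm_mem_diff_right hu⟩)
  have h₃ := card_le_card hsub
  rw [changed_eq_card_diff, changed_eq_card_diff]
  omega

end twoBreak

lemma Is2Break.is3Break {A B : Genome V} (h : Is2Break A B) : Is3Break A B := Or.inl h

lemma exists_is2Break_changed_add_two_le {A B : Genome V} (h : A ≠ B) :
    ∃ C, Is2Break A C ∧ changed C B + 2 ≤ changed A B := by
  obtain ⟨u, hu⟩ := exists_perm_apply_ne h
  exact ⟨A.twoBreak u (B.perm u), is2Break_twoBreak (B.noFix u).symm hu,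
    changed_twoBreak_add_two_le hu⟩

lemma IsComplete3Break.exists_is2Break_is2Break {A B : Genome V} (h : IsComplete3Break A B) :
    ∃ C, Is2Break A C ∧ Is2Break C B := by
  have hAB : A ≠ B := by
    rintro rfl
    simp [IsComplete3Break, changed] at h
  obtain ⟨C, hAC, hCB⟩ := exists_is2Break_changed_add_two_le hAB
  have hC : C ≠ B := by
    rintro rfl
    exact absurd (hAC.symm.trans h) (by norm_num)
  refine ⟨C, hAC, le_antisymm ?_ (four_le_changed hC)⟩
  rw [IsComplete3Break] at h
  omega

namespace Transformation

variable {P P' Q : Genome V}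

def nil (P : Genome V) : Transformation P P := ⟨[], List.IsChain.singleton P, rfl⟩

def cons (h : Is3Break P P') (t : Transformation P' Q) : Transformation P Q :=
  ⟨P' :: t.steps, List.IsChain.cons_cons h t.chain, (List.getLast_cons _).trans t.last_eq⟩

@[simp]
lemma pairs_cons (h : Is3Break P P') (t : Transformation P' Q) :
    (t.cons h).pairs = (P, P') :: t.pairs :=
  rfl

@[elab_as_elim]
lemma induction_cons {motive : ∀ P, Transformation P Q → Prop} (nil : motive Q (nil Q))
    (cons : ∀ P P' (h : Is3Break P P') (t : Transformation P' Q), motive P' t →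
      motive P (t.cons h))
    {P : Genome V} (t : Transformation P Q) : motive P t := by
  obtain ⟨steps, chain, last_eq⟩ := t
  induction steps generalizing P with
  | nil =>
    obtain rfl : P = Q := last_eq
    exact nil
  | cons P' steps ih =>
    obtain ⟨h, chain⟩ := List.isChain_cons_cons.1 chain
    exact cons P P' h ⟨steps, chain, (List.getLast_cons _).symm.trans last_eq⟩ (ih chain _)

lemma n2_cons (h : Is3Break P P') (t : Transformation P' Q) :
    (t.cons h).n2 = t.n2 + if Is2Break P P' then 1 else 0 := by
  simp only [n2, pairs_cons, List.countP_cons, beq_iff_eq]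
  rfl

lemma n3_cons (h : Is3Break P P') (t : Transformation P' Q) :
    (t.cons h).n3 = t.n3 + if IsComplete3Break P P' then 1 else 0 := by
  simp only [n3, pairs_cons, List.countP_cons, beq_iff_eq]
  rfl

lemma W_eq_add_two_sub {α : ℝ} {t t' : Transformation P Q} (h2 : t'.n2 = t.n2 + 2)
    (h3 : t'.n3 + 1 = t.n3) : t'.W α = t.W α + 2 - α := by
  rw [W, W, h2, ← h3]
  push_cast
  ring

lemma exists_n2_add_two_n3_add_one (t : Transformation P Q) (ht : 0 < t.n3) :
    ∃ t' : Transformation P Q, t'.n2 = t.n2 + 2 ∧ t'.n3 + 1 = t.n3 := by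
  induction t using induction_cons with
  | nil => simp [n3, pairs, nil] at ht
  | cons P P' h t ih =>
    by_cases h3 : IsComplete3Break P P'
    · obtain ⟨C, hPC, hCP'⟩ := h3.exists_is2Break_is2Break
      have h2 : ¬Is2Break P P' := by rw [Is2Break, h3]; norm_num
      have h3' : ¬IsComplete3Break P C := by rw [IsComplete3Break, hPC]; norm_num
      have h3'' : ¬IsComplete3Break C P' := by rw [IsComplete3Break, hCP']; norm_num
      refine ⟨(t.cons hCP'.is3Break).cons hPC.is3Break, ?_, ?_⟩
      · simp only [n2_cons, if_pos hPC, if_pos hCP', if_neg h2]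
      · simp only [n3_cons, if_pos h3, if_neg h3', if_neg h3'']
    · rw [n3_cons, if_neg h3] at ht
      obtain ⟨t', h2', h3'⟩ := ih (by omega)
      exact ⟨t'.cons h, by simp only [n2_cons, h2']; ring, by simp only [n3_cons, ← h3']; ring⟩

lemma is3Break_of_mem_pairs (t : Transformation P Q) : ∀ r ∈ t.pairs, Is3Break r.1 r.2 := by
  induction t using induction_cons with
  | nil => simp [pairs, nil]
  | cons P P' h t ih =>
    simp only [pairs_cons, List.forall_mem_cons]
    exact ⟨h, ih⟩

lemma forall_is2Break_of_n3_eq_zero {t : Transformation P Q} (ht : t.n3 = 0) :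
    ∀ r ∈ t.pairs, Is2Break r.1 r.2 := by
  intro r hr
  refine (t.is3Break_of_mem_pairs r hr).resolve_right fun h3 => ?_
  have h6 : r.1.changed r.2 = 6 := h3
  simpa [h6] using List.countP_eq_zero.1 ht r hr

lemma W_eq_len_of_forall_is2Break (α : ℝ) {t : Transformation P Q}
    (ht : ∀ r ∈ t.pairs, Is2Break r.1 r.2) : t.W α = t.len := by
  have hn2 : t.n2 = t.len := by
    rw [n2, List.countP_eq_length.2 fun r hr => beq_iff_eq.2 (ht r hr)]
    simp [pairs, len]
  have hn3 : t.n3 = 0 :=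
    List.countP_eq_zero.2 fun r hr => by
      have h4 : r.1.changed r.2 = 4 := ht r hr
      simp [h4]
  simp [W, hn2, hn3]

lemma exists_forall_is2Break_W_le {α : ℝ} (hα : 2 ≤ α) (t : Transformation P Q) :
    ∃ t₂ : Transformation P Q, (∀ r ∈ t₂.pairs, Is2Break r.1 r.2) ∧ t₂.W α ≤ t.W α := by
  induction hn : t.n3 generalizing t with
  | zero => exact ⟨t, forall_is2Break_of_n3_eq_zero hn, le_rfl⟩
  | succ n ih =>
    obtain ⟨t', h2, h3⟩ := t.exists_n2_add_two_n3_add_one (by omega)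
    obtain ⟨t₂, ht₂, hW⟩ := ih t' (by omega)
    refine ⟨t₂, ht₂, hW.trans ?_⟩
    rw [W_eq_add_two_sub h2 h3]
    linarith

end Transformation

/-- Greedily create one edge of `Q` at a time. -/
lemma exists_transformation_forall_is2Break (P Q : Genome V) :
    ∃ t : Transformation P Q, ∀ r ∈ t.pairs, Is2Break r.1 r.2 := by
  induction hn : changed P Q using Nat.strong_induction_on generalizing P with
  | _ n ih =>
    by_cases hPQ : P = Q
    · subst hPQ
      exact ⟨.nil P, by simp [Transformation.pairs, Transformation.nil]⟩
    obtain ⟨C, hPC, hCQ⟩ := exists_is2Break_changed_add_two_le hPQ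
    obtain ⟨t, ht⟩ := ih _ (by omega) C rfl
    refine ⟨t.cons hPC.is3Break, ?_⟩
    simp only [Transformation.pairs_cons, List.forall_mem_cons]
    exact ⟨hPC, ht⟩

lemma exists_transformation_forall_is2Break_len_eq_d2 (P Q : Genome V) :
    ∃ t : Transformation P Q, (∀ r ∈ t.pairs, Is2Break r.1 r.2) ∧ t.len = d2 P Q := by
  obtain ⟨t, ht⟩ := exists_transformation_forall_is2Break P Q
  exact Nat.sInf_mem (s := {m | ∃ t : Transformation P Q, (∀ r ∈ t.pairs, Is2Break r.1 r.2) ∧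
    t.len = m}) ⟨t.len, t, ht, rfl⟩

lemma isLeast_W_d2 {α : ℝ} (hα : 2 ≤ α) (P Q : Genome V) :
    IsLeast {w | ∃ t : Transformation P Q, t.W α = w} (d2 P Q) := by
  refine ⟨?_, ?_⟩
  · obtain ⟨t, ht, hlen⟩ := exists_transformation_forall_is2Break_len_eq_d2 P Q
    exact ⟨t, by rw [Transformation.W_eq_len_of_forall_is2Break α ht, hlen]⟩
  · rintro w ⟨t, rfl⟩
    obtain ⟨t₂, ht₂, hW⟩ := t.exists_forall_is2Break_W_le hα
    rw [Transformation.W_eq_len_of_forall_is2Break α ht₂] at hW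
    exact le_trans (Nat.cast_le.2 (Nat.sInf_le ⟨t₂, ht₂, rfl⟩)) hW

end Genome

open Genome in
/-- for `α ≥ 2`, every complete 3-break can be replaced by two
2-breaks without increasing the weight (strictly decreasing it when `α > 2`);
consequently there is a minimum-weight transformation consisting only of
2-breaks, and `D_α(P,Q) = d₂(P,Q)`. -/
theorem stmt17 {V : Type*} [Fintype V] [DecidableEq V] (α : ℝ) (hα : 2 ≤ α) :
    (∀ A B : Genome V, IsComplete3Break A B →
      ∃ C : Genome V, Is2Break A C ∧ Is2Break C B) ∧
    (∀ (P Q : Genome V) (t : Transformation P Q), 0 < t.n3 →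
      ∃ t' : Transformation P Q, t'.n2 = t.n2 + 2 ∧ t'.n3 = t.n3 - 1 ∧
        t'.W α ≤ t.W α ∧ (2 < α → t'.W α < t.W α)) ∧
    (∀ P Q : Genome V,
      (∃ t : Transformation P Q, (∀ r ∈ t.pairs, Is2Break r.1 r.2) ∧
        t.W α = Dist α P Q) ∧ Dist α P Q = (d2 P Q : ℝ)) := by
  refine ⟨fun A B h => h.exists_is2Break_is2Break, fun P Q t ht => ?_, fun P Q => ?_⟩
  · obtain ⟨t', h2, h3⟩ := t.exists_n2_add_two_n3_add_one ht
    have hW := Transformation.W_eq_add_two_sub (α := α) h2 h3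
    exact ⟨t', h2, by omega, by linarith, fun _ => by linarith⟩
  · have hD : Dist α P Q = d2 P Q := (isLeast_W_d2 hα P Q).csInf_eq
    obtain ⟨t, ht, hlen⟩ := exists_transformation_forall_is2Break_len_eq_d2 P Q
    exact ⟨⟨t, ht, by rw [Transformation.W_eq_len_of_forall_is2Break α ht, hlen, hD]⟩, hD⟩
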